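/- arXiv:1703.01157 — 2 statements merged into one kernel-verified Lean document; each statement's English description precedes it below -/
import Mathlib

section
/- Let D ⊆ ℝⁿ be open, let (p_k)_{k∈ℕ} be a sequence of reals with p_k > 2 and p_k → ∞, and let (u_k)_{k∈ℕ} be continuous functions on D, each a viscosity solution of the p_k-Laplace equation in D in the following sense: for every C² function ψ and every point x ∈ D at which u_k − ψ attains a local minimum (respectively, a local maximum) and at which ∇ψ(x) ≠ 0, one has (p_k − 2)‖∇ψ(x)‖^{p_k−4} Δ_∞ψ(x) + ‖∇ψ(x)‖^{p_k−2} Δψ(x) ≤ 0 (respectively, ≥ 0). If u_k → u locally uniformly on D, then u is a viscosity solution of Δ_∞u = 0 in D: for every C² function ψ and every x₀ ∈ D at which u − ψ attains a local minimum (respectively, a local maximum), Δ_∞ψ(x₀) ≤ 0 (respectively, Δ_∞ψ(x₀) ≥ 0). -/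
open Filter

/-- The infinity-Laplacian `Δ_∞ψ(x) = ⟨D²ψ(x) ∇ψ(x), ∇ψ(x)⟩` of `ψ` at `x`,
where the Hessian is `D²ψ(x) = D(∇ψ)(x)`. -/
noncomputable def infLap (n : ℕ) (ψ : EuclideanSpace ℝ (Fin n) → ℝ)
    (x : EuclideanSpace ℝ (Fin n)) : ℝ :=
  inner ℝ (fderiv ℝ (gradient ψ) x (gradient ψ x)) (gradient ψ x)

/-- The Laplacian `Δψ(x)`, i.e. the trace of the Hessian `D²ψ(x)`. -/
noncomputable def lap (n : ℕ) (ψ : EuclideanSpace ℝ (Fin n) → ℝ)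
    (x : EuclideanSpace ℝ (Fin n)) : ℝ :=
  ∑ i : Fin n, inner ℝ (fderiv ℝ (gradient ψ) x (EuclideanSpace.single i (1 : ℝ)))
    (EuclideanSpace.single i (1 : ℝ))

/-!
If `u - ψ` has a local minimum at `x₀`, then `u - φ`, with `φ = ψ - ‖· - x₀‖⁴`, has a strict one, so
minimizers `x_k` of `u_k - φ` on a small closed ball tend to `x₀`; the quartic term changes neither
`∇ψ` nor `D²ψ` at `x₀`. If `∇ψ(x₀) ≠ 0`, dividing the `p_k`-inequality for `φ` at `x_k` by
`(p_k - 2) ‖∇φ‖ ^ (p_k - 4)` gives `Δ_∞φ(x_k) ≤ -‖∇φ(x_k)‖² Δφ(x_k) / (p_k - 2) → 0`, while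
`Δ_∞ψ(x₀) = 0` if `∇ψ(x₀) = 0`. Subsolutions are handled by passing to `-u_k`, `-u`, `-ψ`.
-/

open Topology InnerProductSpace Metric

section Minimizers

variable {X ι : Type*} [PseudoMetricSpace X] {l : Filter ι}

theorem tendsto_of_isMinOn_of_tendstoUniformlyOn {K : Set X} {f : X → ℝ} {F : ι → X → ℝ}
    {c : X} {x : ι → X} (hF : TendstoUniformlyOn F f l K) (hc : c ∈ K) (hxK : ∀ k, x k ∈ K)
    (hx : ∀ k, IsMinOn (F k) K (x k))
    (hsep : ∀ δ > 0, ∃ ε > 0, ∀ y ∈ K, δ ≤ dist y c → f c + ε ≤ f y) :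
    Tendsto x l (𝓝 c) := by
  refine Metric.tendsto_nhds.mpr fun δ hδ => ?_
  obtain ⟨ε, hε, hsep⟩ := hsep δ hδ
  filter_upwards [tendstoUniformlyOn_iff.mp hF (ε / 2) (half_pos hε)] with k hk
  by_contra! hfar
  have hFc := abs_lt.mp (Real.dist_eq _ _ ▸ hk c hc)
  have hFx := abs_lt.mp (Real.dist_eq _ _ ▸ hk (x k) (hxK k))
  linarith [isMinOn_iff.mp (hx k) c hc, hsep (x k) (hxK k) hfar]

theorem exists_tendsto_isLocalMin_add_dist_pow_four [ProperSpace X] {D : Set X} (hD : IsOpen D)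
    {u φ : X → ℝ} {uk : ℕ → X → ℝ} (huk : ∀ k, ContinuousOn (uk k) D)
    (hconv : TendstoLocallyUniformlyOn uk u atTop D) (hφ : Continuous φ) {c : X} (hc : c ∈ D)
    (hmin : IsLocalMin (fun y => u y - φ y) c) :
    ∃ x : ℕ → X, Tendsto x atTop (𝓝 c) ∧
      ∀ᶠ k in atTop, IsLocalMin (fun y => uk k y - φ y + dist y c ^ 4) (x k) := by
  obtain ⟨r, hr, hball⟩ := nhds_basis_closedBall.mem_iff.mp (inter_mem (hD.mem_nhds hc) hmin)
  have hKD : closedBall c r ⊆ D := fun y hy => (hball hy).1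
  have hK := isCompact_closedBall c r
  have hex k : ∃ y ∈ closedBall c r,
      IsMinOn (fun y => uk k y - φ y + dist y c ^ 4) (closedBall c r) y :=
    hK.exists_isMinOn ⟨c, mem_closedBall_self hr.le⟩
      ((((huk k).mono hKD).sub hφ.continuousOn).add (by fun_prop))
  choose x hxK hxmin using hex
  have hF : TendstoUniformlyOn (fun k y => uk k y - φ y + dist y c ^ 4)
      (fun y => u y - φ y + dist y c ^ 4) atTop (closedBall c r) := by
    have h := (tendstoLocallyUniformlyOn_iff_forall_isCompact hD).mp hconv _ hKD hK
    rw [tendstoUniformlyOn_iff] at h ⊢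
    exact fun ε hε => (h ε hε).mono fun k hk y hy => by simpa using hk y hy
  have hx : Tendsto x atTop (𝓝 c) := by
    refine tendsto_of_isMinOn_of_tendstoUniformlyOn hF (mem_closedBall_self hr.le) hxK hxmin
      fun δ hδ => ⟨δ ^ 4, by positivity, fun y hy hδy => ?_⟩
    have hy := (hball hy).2
    simp only [Set.mem_ofPred_eq, dist_self] at hy ⊢
    linarith [pow_le_pow_left₀ hδ.le hδy 4]
  refine ⟨x, hx, ?_⟩
  filter_upwards [Metric.tendsto_nhds.mp hx r hr] with k hk
  exact (hxmin k).isLocalMin (closedBall_mem_nhds_of_mem hk)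

end Minimizers

section Gradient

variable {F : Type*} [NormedAddCommGroup F] [InnerProductSpace ℝ F] [CompleteSpace F]

theorem gradient_fun_neg (f : F → ℝ) : gradient (fun y => -f y) = fun y => -gradient f y := by
  ext1 x
  simp only [gradient, fderiv_fun_neg, map_neg]

theorem gradient_fun_sub {f g : F → ℝ} {x : F} (hf : DifferentiableAt ℝ f x)
    (hg : DifferentiableAt ℝ g x) :
    gradient (fun y => f y - g y) x = gradient f x - gradient g x := by
  simp only [gradient, fderiv_fun_sub hf hg, map_sub]

theorem ContDiff.gradient {f : F → ℝ} {m k : WithTop ℕ∞} (hf : ContDiff ℝ k f)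
    (hmk : m + 1 ≤ k) : ContDiff ℝ m (gradient f) :=
  (toDual ℝ F).symm.contDiff.comp (hf.fderiv_right hmk)

theorem hasGradientAt_norm_sub_pow_four (c y : F) :
    HasGradientAt (fun z => ‖z - c‖ ^ 4) ((4 * ‖y - c‖ ^ 2) • (y - c)) y := by
  have h := ((hasFDerivAt_id y).sub_const c).norm_sq.pow 2
  have hfun : (fun z : F => ‖z - c‖ ^ 4) = fun z => (‖id z - c‖ ^ 2) ^ 2 := by
    ext z; rw [id, ← pow_mul]
  rw [hasGradientAt_iff_hasFDerivAt, hfun]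
  refine h.congr_fderiv ?_
  ext v
  simp
  ring

theorem hasFDerivAt_gradient_norm_sub_pow_four (c : F) :
    HasFDerivAt (gradient fun z => ‖z - c‖ ^ 4) (0 : F →L[ℝ] F) c := by
  rw [gradient_eq (hasGradientAt_norm_sub_pow_four c)]
  have h := (((hasFDerivAt_id c).sub_const c).norm_sq.const_mul 4).fun_smul
    ((hasFDerivAt_id c).sub_const c)
  simpa using h

end Gradient

/-- The `p`-Laplacian `div (‖∇ψ‖ ^ (p - 2) ∇ψ)` in non-divergence form. -/
noncomputable def pLap (n : ℕ) (p : ℝ) (ψ : EuclideanSpace ℝ (Fin n) → ℝ)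
    (x : EuclideanSpace ℝ (Fin n)) : ℝ :=
  (p - 2) * ‖gradient ψ x‖ ^ (p - 4) * infLap n ψ x + ‖gradient ψ x‖ ^ (p - 2) * lap n ψ x

def IsPLapViscositySupersolution (n : ℕ) (p : ℝ) (D : Set (EuclideanSpace ℝ (Fin n)))
    (v : EuclideanSpace ℝ (Fin n) → ℝ) : Prop :=
  ∀ ψ : EuclideanSpace ℝ (Fin n) → ℝ, ContDiff ℝ 2 ψ →
    ∀ x ∈ D, IsLocalMin (fun y => v y - ψ y) x → gradient ψ x ≠ 0 → pLap n p ψ x ≤ 0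

def IsPLapViscositySubsolution (n : ℕ) (p : ℝ) (D : Set (EuclideanSpace ℝ (Fin n)))
    (v : EuclideanSpace ℝ (Fin n) → ℝ) : Prop :=
  ∀ ψ : EuclideanSpace ℝ (Fin n) → ℝ, ContDiff ℝ 2 ψ →
    ∀ x ∈ D, IsLocalMax (fun y => v y - ψ y) x → gradient ψ x ≠ 0 → 0 ≤ pLap n p ψ x

def IsInfLapViscositySupersolution (n : ℕ) (D : Set (EuclideanSpace ℝ (Fin n)))
    (u : EuclideanSpace ℝ (Fin n) → ℝ) : Prop :=
  ∀ ψ : EuclideanSpace ℝ (Fin n) → ℝ, ContDiff ℝ 2 ψ →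
    ∀ x ∈ D, IsLocalMin (fun y => u y - ψ y) x → infLap n ψ x ≤ 0

def IsInfLapViscositySubsolution (n : ℕ) (D : Set (EuclideanSpace ℝ (Fin n)))
    (u : EuclideanSpace ℝ (Fin n) → ℝ) : Prop :=
  ∀ ψ : EuclideanSpace ℝ (Fin n) → ℝ, ContDiff ℝ 2 ψ →
    ∀ x ∈ D, IsLocalMax (fun y => u y - ψ y) x → 0 ≤ infLap n ψ x

variable {n : ℕ}

local notation "E" => EuclideanSpace ℝ (Fin n)

theorem infLap_fun_neg (ψ : E → ℝ) (x : E) : infLap n (fun y => -ψ y) x = -infLap n ψ x := by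
  simp only [infLap, gradient_fun_neg, fderiv_fun_neg, neg_apply, map_neg,
    inner_neg_right, neg_neg]

theorem lap_fun_neg (ψ : E → ℝ) (x : E) : lap n (fun y => -ψ y) x = -lap n ψ x := by
  simp only [lap, gradient_fun_neg, fderiv_fun_neg, neg_apply, inner_neg_left,
    Finset.sum_neg_distrib]

theorem continuous_infLap {ψ : E → ℝ} (hψ : ContDiff ℝ 2 ψ) : Continuous (infLap n ψ) := by
  have hg := hψ.gradient (m := 1) le_rfl
  exact ((hg.continuous_fderiv one_ne_zero).clm_apply hg.continuous).inner hg.continuous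

theorem continuous_lap {ψ : E → ℝ} (hψ : ContDiff ℝ 2 ψ) : Continuous (lap n ψ) := by
  have hg := (hψ.gradient (m := 1) le_rfl).continuous_fderiv one_ne_zero
  exact continuous_finsetSum _ fun i _ => (hg.clm_apply continuous_const).inner continuous_const

theorem infLap_sub_eq_of_hasFDerivAt_gradient_zero {ψ q : E → ℝ} {c : E}
    (hψ : Differentiable ℝ ψ) (hψ' : DifferentiableAt ℝ (gradient ψ) c)
    (hq : Differentiable ℝ q) (hq₀ : gradient q c = 0)
    (hq' : HasFDerivAt (gradient q) (0 : E →L[ℝ] E) c) :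
    infLap n (fun y => ψ y - q y) c = infLap n ψ c := by
  have hfun : gradient (fun y => ψ y - q y) = fun y => gradient ψ y - gradient q y :=
    funext fun y => gradient_fun_sub (hψ y) (hq y)
  simp only [infLap, hfun, fderiv_fun_sub hψ' hq'.differentiableAt, hq'.fderiv, hq₀, sub_zero]

theorem pLap_fun_neg (p : ℝ) (ψ : E → ℝ) (x : E) :
    pLap n p (fun y => -ψ y) x = -pLap n p ψ x := by
  simp only [pLap, gradient_fun_neg, norm_neg, infLap_fun_neg, lap_fun_neg]
  ring

theorem IsPLapViscositySubsolution.neg {p : ℝ} {D : Set E} {v : E → ℝ}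
    (h : IsPLapViscositySubsolution n p D v) :
    IsPLapViscositySupersolution n p D (fun y => -v y) := by
  intro ψ hψ x hx hmin hg
  have hmax : IsLocalMax (fun y => v y - -ψ y) x := by
    simpa [neg_sub_comm, sub_neg_eq_add, add_comm] using hmin.neg
  have h' := h (fun y => -ψ y) hψ.neg x hx hmax (by simpa [gradient_fun_neg] using hg)
  rw [pLap_fun_neg] at h'
  linarith

theorem IsInfLapViscositySubsolution.of_neg {D : Set E} {u : E → ℝ}
    (h : IsInfLapViscositySupersolution n D (fun y => -u y)) :
    IsInfLapViscositySubsolution n D u := by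
  intro ψ hψ x hx hmax
  have hmin : IsLocalMin (fun y => -u y - -ψ y) x := by
    simpa only [neg_sub, sub_neg_eq_add, neg_add_eq_sub] using hmax.neg
  have h' := h (fun y => -ψ y) hψ.neg x hx hmin
  rw [infLap_fun_neg] at h'
  linarith

theorem infLap_le_of_pLap_nonpos {p : ℝ} {ψ : E → ℝ} {x : E} (hp : 2 < p)
    (hg : gradient ψ x ≠ 0) (h : pLap n p ψ x ≤ 0) :
    infLap n ψ x ≤ -(‖gradient ψ x‖ ^ 2 * lap n ψ x) / (p - 2) := by
  have hg₀ : 0 < ‖gradient ψ x‖ := norm_pos_iff.mpr hg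
  have hpow : ‖gradient ψ x‖ ^ (p - 2) = ‖gradient ψ x‖ ^ (p - 4) * ‖gradient ψ x‖ ^ 2 := by
    rw [← Real.rpow_natCast, ← Real.rpow_add hg₀]
    ring_nf
  have hfactor : pLap n p ψ x = ‖gradient ψ x‖ ^ (p - 4) *
      ((p - 2) * infLap n ψ x + ‖gradient ψ x‖ ^ 2 * lap n ψ x) := by
    rw [pLap, hpow]
    ring
  rw [hfactor] at h
  have h' := nonpos_of_mul_nonpos_right h (Real.rpow_pos_of_pos hg₀ _)
  rw [le_div_iff₀ (by linarith)]
  linarith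

theorem infLap_nonpos_of_tendsto {ι : Type*} {l : Filter ι} [l.NeBot] {ψ : E → ℝ} {c : E}
    {x : ι → E} {p : ι → ℝ} (hψ : ContDiff ℝ 2 ψ) (hx : Tendsto x l (𝓝 c))
    (hp : Tendsto p l atTop) (h : ∀ᶠ k in l, gradient ψ (x k) ≠ 0 → pLap n (p k) ψ (x k) ≤ 0) :
    infLap n ψ c ≤ 0 := by
  by_cases hg : gradient ψ c = 0
  · simp [infLap, hg]
  have hgrad := (hψ.gradient (m := 1) le_rfl).continuous
  have hnum : Tendsto (fun k => -(‖gradient ψ (x k)‖ ^ 2 * lap n ψ (x k))) l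
      (𝓝 (-(‖gradient ψ c‖ ^ 2 * lap n ψ c))) :=
    (((hgrad.norm.pow 2).mul (continuous_lap hψ)).neg.tendsto c).comp hx
  refine le_of_tendsto_of_tendsto (((continuous_infLap hψ).tendsto c).comp hx)
    (hnum.div_atTop (tendsto_atTop_add_const_right l (-2) hp)) ?_
  filter_upwards [h, hp.eventually_gt_atTop 2, ((hgrad.tendsto c).comp hx).eventually_ne hg]
    with k hk hpk hgk
  exact infLap_le_of_pLap_nonpos hpk hgk (hk hgk)

theorem IsInfLapViscositySupersolution.of_tendstoLocallyUniformlyOn {D : Set E} (hD : IsOpen D)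
    {p : ℕ → ℝ} (hp : Tendsto p atTop atTop) {u : E → ℝ} {uk : ℕ → E → ℝ}
    (huk : ∀ k, ContinuousOn (uk k) D) (hsuper : ∀ k, IsPLapViscositySupersolution n (p k) D (uk k))
    (hconv : TendstoLocallyUniformlyOn uk u atTop D) :
    IsInfLapViscositySupersolution n D u := by
  intro ψ hψ c hc hmin
  obtain ⟨x, hx, hloc⟩ :=
    exists_tendsto_isLocalMin_add_dist_pow_four hD huk hconv hψ.continuous hc hmin
  have hq : ContDiff ℝ 2 fun z : E => ‖z - c‖ ^ 4 := by
    simpa [← pow_mul] using ((contDiff_id.sub contDiff_const).norm_sq ℝ).pow 2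
  have hq₀ : gradient (fun z : E => ‖z - c‖ ^ 4) c = 0 := by
    simp [(hasGradientAt_norm_sub_pow_four c c).gradient]
  rw [← infLap_sub_eq_of_hasFDerivAt_gradient_zero (hψ.differentiable two_ne_zero)
    ((hψ.gradient (m := 1) le_rfl).differentiable one_ne_zero c) (hq.differentiable two_ne_zero)
    hq₀ (hasFDerivAt_gradient_norm_sub_pow_four c)]
  refine infLap_nonpos_of_tendsto (hψ.sub hq) hx hp ?_
  filter_upwards [hloc, hx.eventually (hD.mem_nhds hc)] with k hk hxk
  exact hsuper k _ (hψ.sub hq) (x k) hxk (by simpa [dist_eq_norm, sub_add] using hk)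

theorem limit_is_infinity_harmonic_general
    (n : ℕ) (D : Set (EuclideanSpace ℝ (Fin n))) (hD : IsOpen D)
    (p : ℕ → ℝ) (hp : Tendsto p atTop atTop)
    (u : EuclideanSpace ℝ (Fin n) → ℝ) (uk : ℕ → EuclideanSpace ℝ (Fin n) → ℝ)
    (huk : ∀ k, ContinuousOn (uk k) D)
    (hsuper : ∀ k, ∀ ψ : EuclideanSpace ℝ (Fin n) → ℝ, ContDiff ℝ 2 ψ →
      ∀ x ∈ D, IsLocalMin (fun y => uk k y - ψ y) x → gradient ψ x ≠ 0 →
        (p k - 2) * ‖gradient ψ x‖ ^ (p k - 4) * infLap n ψ x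
          + ‖gradient ψ x‖ ^ (p k - 2) * lap n ψ x ≤ 0)
    (hsub : ∀ k, ∀ ψ : EuclideanSpace ℝ (Fin n) → ℝ, ContDiff ℝ 2 ψ →
      ∀ x ∈ D, IsLocalMax (fun y => uk k y - ψ y) x → gradient ψ x ≠ 0 →
        0 ≤ (p k - 2) * ‖gradient ψ x‖ ^ (p k - 4) * infLap n ψ x
          + ‖gradient ψ x‖ ^ (p k - 2) * lap n ψ x)
    (hconv : TendstoLocallyUniformlyOn uk u atTop D) :
    (∀ ψ : EuclideanSpace ℝ (Fin n) → ℝ, ContDiff ℝ 2 ψ →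
      ∀ x₀ ∈ D, IsLocalMin (fun y => u y - ψ y) x₀ → infLap n ψ x₀ ≤ 0) ∧
    (∀ ψ : EuclideanSpace ℝ (Fin n) → ℝ, ContDiff ℝ 2 ψ →
      ∀ x₀ ∈ D, IsLocalMax (fun y => u y - ψ y) x₀ → 0 ≤ infLap n ψ x₀) :=
  ⟨IsInfLapViscositySupersolution.of_tendstoLocallyUniformlyOn hD hp huk hsuper hconv,
    IsInfLapViscositySubsolution.of_neg <|
      IsInfLapViscositySupersolution.of_tendstoLocallyUniformlyOn hD hp (fun k => (huk k).neg)
        (fun k => IsPLapViscositySubsolution.neg (hsub k)) hconv.fun_neg⟩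

/-- a locally uniform limit in an open set `D` of viscosity solutions
of the `p_k`-Laplace equations, `p_k → ∞`, is a viscosity solution of `Δ_∞ u = 0` in `D`. -/
theorem limit_is_infinity_harmonic
    (n : ℕ) (D : Set (EuclideanSpace ℝ (Fin n))) (hD : IsOpen D)
    (p : ℕ → ℝ) (hp2 : ∀ k, 2 < p k) (hp : Tendsto p atTop atTop)
    (u : EuclideanSpace ℝ (Fin n) → ℝ) (uk : ℕ → EuclideanSpace ℝ (Fin n) → ℝ)
    (hu : ContinuousOn u D) (huk : ∀ k, ContinuousOn (uk k) D)
    (hsuper : ∀ k, ∀ ψ : EuclideanSpace ℝ (Fin n) → ℝ, ContDiff ℝ 2 ψ →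
      ∀ x ∈ D, IsLocalMin (fun y => uk k y - ψ y) x → gradient ψ x ≠ 0 →
        (p k - 2) * ‖gradient ψ x‖ ^ (p k - 4) * infLap n ψ x
          + ‖gradient ψ x‖ ^ (p k - 2) * lap n ψ x ≤ 0)
    (hsub : ∀ k, ∀ ψ : EuclideanSpace ℝ (Fin n) → ℝ, ContDiff ℝ 2 ψ →
      ∀ x ∈ D, IsLocalMax (fun y => uk k y - ψ y) x → gradient ψ x ≠ 0 →
        0 ≤ (p k - 2) * ‖gradient ψ x‖ ^ (p k - 4) * infLap n ψ x
          + ‖gradient ψ x‖ ^ (p k - 2) * lap n ψ x)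
    (hconv : TendstoLocallyUniformlyOn uk u atTop D) :
    (∀ ψ : EuclideanSpace ℝ (Fin n) → ℝ, ContDiff ℝ 2 ψ →
      ∀ x₀ ∈ D, IsLocalMin (fun y => u y - ψ y) x₀ → infLap n ψ x₀ ≤ 0) ∧
    (∀ ψ : EuclideanSpace ℝ (Fin n) → ℝ, ContDiff ℝ 2 ψ →
      ∀ x₀ ∈ D, IsLocalMax (fun y => u y - ψ y) x₀ → 0 ≤ infLap n ψ x₀) :=
  limit_is_infinity_harmonic_general n D hD p hp u uk huk hsuper hsub hconv
end

section
/- Let (u_k)_{k∈ℕ} be continuous nonnegative functions on ℝⁿ converging uniformly on ℝⁿ to a continuous function u, and let θ_k → θ > 0 be positive reals. Assume every ∂{u_k>0} is nonempty, and that for each k the function u_k has linear growth away from the free boundary with constant θ_k and is strongly non-degenerate with constant θ_k. Then u has linear growth away from the free boundary with constant θ and is strongly non-degenerate with constant θ; that is, u(x) ≥ θ·dist(x, ∂{u>0}) for every x with u(x) > 0, and sup_{B_r(x₀)} u ≥ θ·r for every x₀ ∈ ∂{u>0} and every r > 0. -/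
/-! A closed ball around `x ∈ {u > 0}` of radius `ρ < dist(x, ∂{u > 0})` lies in `{u > 0}`; by
compactness and uniform convergence `u_k > 0` on it for large `k`, so `dist(x, ∂{u_k > 0}) ≥ ρ`
and `θ_k ρ ≤ u_k x`, which passes to the limit.

Near `x₀ ∈ ∂{u > 0}` there are points `y` where `u y` is small and positive; linear growth of
`u_k` at `y` then yields points `z_k ∈ ∂{u_k > 0}` close to `x₀`. Non-degeneracy of `u_k` on a
slightly smaller ball around `z_k`, contained in `closedBall x₀ r`, passes to the limit by uniform
convergence. -/

open Metric Filter Topology Set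

def HasLinearGrowth {E : Type*} [PseudoMetricSpace E] (θ : ℝ) (v : E → ℝ) : Prop :=
  ∀ x, 0 < v x → θ * infDist x (frontier {y | 0 < v y}) ≤ v x

def IsStronglyNondegenerate {E : Type*} [PseudoMetricSpace E] (θ : ℝ) (v : E → ℝ) : Prop :=
  ∀ x₀ ∈ frontier {y | 0 < v y}, ∀ r > (0 : ℝ), θ * r ≤ sSup (v '' closedBall x₀ r)

lemma HasLinearGrowth.infDist_le_div {E : Type*} [PseudoMetricSpace E] {θ : ℝ} {v : E → ℝ}
    (hv : HasLinearGrowth θ v) (hθ : 0 < θ) {x : E} (hx : 0 < v x) :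
    infDist x (frontier {y | 0 < v y}) ≤ v x / θ :=
  (le_div_iff₀' hθ).2 (hv x hx)

lemma eq_zero_of_mem_frontier_pos {X : Type*} [TopologicalSpace X] {v : X → ℝ}
    (hv : Continuous v) (hv0 : ∀ x, 0 ≤ v x) {z : X} (hz : z ∈ frontier {x | 0 < v x}) :
    v z = 0 :=
  le_antisymm (not_lt.1 ((isOpen_lt continuous_const hv).frontier_eq ▸ hz).2) (hv0 z)

lemma IsOpen.ball_infDist_frontier_subset {E : Type*} [NormedAddCommGroup E] [NormedSpace ℝ E]
    {s : Set E} (hs : IsOpen s) {x : E} (hx : x ∈ s) :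
    ball x (infDist x (frontier s)) ⊆ s := by
  rcases (infDist_nonneg (x := x) (s := frontier s)).eq_or_lt with h | h
  · simp [← h]
  refine (convex_ball x _).isPreconnected.subset_of_closure_inter_subset hs
    ⟨x, mem_ball_self h, hx⟩ ?_
  rintro y ⟨hyc, hyb⟩
  by_contra hys
  exact ball_infDist_subset_compl hyb (hs.frontier_eq ▸ ⟨hyc, hys⟩)

lemma mul_le_of_forall_mem_Ioo_mul_le {θ r a : ℝ} (hr : 0 < r)
    (h : ∀ t ∈ Ioo 0 r, θ * t ≤ a) : θ * r ≤ a :=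
  le_of_tendsto (((continuous_const_mul θ).tendsto r).mono_left nhdsWithin_le_nhds)
    (eventually_of_mem (Ioo_mem_nhdsLT hr) h)

lemma TendstoUniformlyOn.eventually_forall_pos {X ι : Type*} [TopologicalSpace X]
    {F : ι → X → ℝ} {f : X → ℝ} {p : Filter ι} {K : Set X} (h : TendstoUniformlyOn F f p K)
    (hK : IsCompact K) (hf : ContinuousOn f K) (hpos : ∀ x ∈ K, 0 < f x) :
    ∀ᶠ k in p, ∀ x ∈ K, 0 < F k x := by
  obtain ⟨c, hc, hcf⟩ := hK.exists_forall_le' hf hpos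
  filter_upwards [Metric.tendstoUniformlyOn_iff.1 h c hc] with k hk x hx
  have hdist : |f x - F k x| < c := hk x hx
  linarith [hcf x hx, (abs_lt.1 hdist).2]

section

variable {E : Type*} [NormedAddCommGroup E] [NormedSpace ℝ E]
  {ι : Type*} {p : Filter ι} {F : ι → E → ℝ} {f : E → ℝ} {θ : ι → ℝ} {θ₀ : ℝ}

theorem HasLinearGrowth.of_tendstoUniformly [ProperSpace E] [p.NeBot] (hf : Continuous f)
    (hFc : ∀ k, Continuous (F k)) (hF0 : ∀ k x, 0 ≤ F k x)
    (hne : ∀ k, (frontier {x | 0 < F k x}).Nonempty) (hθ : ∀ k, 0 ≤ θ k)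
    (hlin : ∀ k, HasLinearGrowth (θ k) (F k)) (hconv : TendstoUniformly F f p)
    (hθconv : Tendsto θ p (𝓝 θ₀)) : HasLinearGrowth θ₀ f := by
  intro x hx
  rcases (infDist_nonneg (x := x) (s := frontier {y | 0 < f y})).eq_or_lt with hd | hd
  · rw [← hd, mul_zero]
    exact hx.le
  refine mul_le_of_forall_mem_Ioo_mul_le hd fun ρ hρ => ?_
  have hpos : ∀ᶠ k in p, ∀ y ∈ closedBall x ρ, 0 < F k y :=
    hconv.tendstoUniformlyOn.eventually_forall_pos (isCompact_closedBall x ρ) hf.continuousOn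
      fun y hy => (isOpen_lt continuous_const hf).ball_infDist_frontier_subset hx
        (closedBall_subset_ball hρ.2 hy)
  refine le_of_tendsto_of_tendsto (hθconv.mul_const ρ) (hconv.tendsto_at x) ?_
  filter_upwards [hpos] with k hk
  -- `F k` vanishes on its free boundary, so the free boundary avoids `closedBall x ρ`.
  have hρ_le : ρ ≤ infDist x (frontier {y | 0 < F k y}) :=
    (le_infDist (hne k)).2 fun z hz => not_lt.1 fun hzx =>
      (hk z (mem_closedBall_comm.1 hzx.le)).ne' (eq_zero_of_mem_frontier_pos (hFc k) (hF0 k) hz)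
  calc θ k * ρ ≤ θ k * infDist x (frontier {y | 0 < F k y}) :=
        mul_le_mul_of_nonneg_left hρ_le (hθ k)
    _ ≤ F k x := hlin k x (hk x (mem_closedBall_self hρ.1.le))

end

section

variable {E : Type*} [PseudoMetricSpace E]
  {ι : Type*} {p : Filter ι} {F : ι → E → ℝ} {f : E → ℝ} {θ : ι → ℝ} {θ₀ : ℝ}

theorem tendsto_infDist_frontier_pos (hf : Continuous f) (hf0 : ∀ x, 0 ≤ f x)
    (hθ : ∀ k, 0 < θ k) (hlin : ∀ k, HasLinearGrowth (θ k) (F k))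
    (hconv : ∀ x, Tendsto (fun k => F k x) p (𝓝 (f x))) (hθconv : Tendsto θ p (𝓝 θ₀))
    (hθ₀ : 0 < θ₀) {x₀ : E} (hx₀ : x₀ ∈ frontier {x | 0 < f x}) :
    Tendsto (fun k => infDist x₀ (frontier {x | 0 < F k x})) p (𝓝 0) := by
  refine tendsto_order.2
    ⟨fun a ha => Eventually.of_forall fun k => ha.trans_le infDist_nonneg, fun s hs => ?_⟩
  have hfx₀ : f x₀ / θ₀ < s / 2 := by
    rw [eq_zero_of_mem_frontier_pos hf hf0 hx₀, zero_div]
    positivity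
  obtain ⟨y, ⟨hyx₀, hys⟩, hy⟩ := mem_closure_iff_nhds.1 (frontier_subset_closure hx₀) _
    (Eventually.and (ball_mem_nhds x₀ (half_pos hs))
      (((hf.div_const θ₀).tendsto x₀).eventually (gt_mem_nhds hfx₀)))
  have hlim : Tendsto (fun k => F k y / θ k) p (𝓝 (f y / θ₀)) :=
    (hconv y).div hθconv hθ₀.ne'
  filter_upwards [(hconv y).eventually (lt_mem_nhds hy), hlim.eventually (gt_mem_nhds hys)]
    with k hpos hsmall
  calc infDist x₀ (frontier {x | 0 < F k x})
      ≤ infDist y (frontier {x | 0 < F k x}) + dist x₀ y := infDist_le_infDist_add_dist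
    _ ≤ F k y / θ k + dist x₀ y := by gcongr; exact (hlin k).infDist_le_div (hθ k) hpos
    _ < s := by linarith [mem_ball'.1 hyx₀]

theorem IsStronglyNondegenerate.of_tendstoUniformly [ProperSpace E] [p.NeBot]
    (hf : Continuous f) (hf0 : ∀ x, 0 ≤ f x) (hne : ∀ k, (frontier {x | 0 < F k x}).Nonempty)
    (hθ : ∀ k, 0 < θ k) (hlin : ∀ k, HasLinearGrowth (θ k) (F k))
    (hnd : ∀ k, IsStronglyNondegenerate (θ k) (F k)) (hconv : TendstoUniformly F f p)
    (hθconv : Tendsto θ p (𝓝 θ₀)) (hθ₀ : 0 < θ₀) : IsStronglyNondegenerate θ₀ f := by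
  intro x₀ hx₀ r hr
  have hbdd : BddAbove (f '' closedBall x₀ r) := ((isCompact_closedBall x₀ r).image hf).bddAbove
  refine le_of_forall_pos_le_add fun η hη => mul_le_of_forall_mem_Ioo_mul_le hr fun t ht => ?_
  have hnear : ∀ᶠ k in p, ∃ z ∈ frontier {x | 0 < F k x}, dist x₀ z < r - t :=
    ((tendsto_infDist_frontier_pos hf hf0 hθ hlin hconv.tendsto_at hθconv hθ₀ hx₀).eventually
      (gt_mem_nhds (sub_pos.2 ht.2))).mono fun k hk => (infDist_lt_iff (hne k)).1 hk
  have hclose : ∀ᶠ k in p, ∀ x, F k x < f x + η :=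
    (Metric.tendstoUniformly_iff.1 hconv η hη).mono fun k hk x => by
      linarith [(abs_lt.1 (Real.dist_eq (f x) (F k x) ▸ hk x)).1]
  refine le_of_tendsto (hθconv.mul_const t) ?_
  filter_upwards [hnear, hclose] with k ⟨z, hz, hzx₀⟩ hk
  have hsub : closedBall z t ⊆ closedBall x₀ r :=
    closedBall_subset_closedBall' (by linarith [dist_comm z x₀])
  calc θ k * t ≤ sSup (F k '' closedBall z t) := hnd k z hz t ht.1
    _ ≤ sSup (f '' closedBall x₀ r) + η :=
      csSup_le ((nonempty_closedBall.2 ht.1.le).image _) (forall_mem_image.2 fun w hw =>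
        (hk w).le.trans (add_le_add_left (le_csSup hbdd (mem_image_of_mem f (hsub hw))) η))

end

/-- linear growth and strong non-degeneracy pass to the uniform limit. -/
theorem linear_growth_and_nondegeneracy_of_limit
    (n : ℕ) (u : EuclideanSpace ℝ (Fin n) → ℝ)
    (uk : ℕ → EuclideanSpace ℝ (Fin n) → ℝ)
    (hu : Continuous u) (huk : ∀ k, Continuous (uk k))
    (hu0 : ∀ x, 0 ≤ u x) (huk0 : ∀ k x, 0 ≤ uk k x)
    (hconv : TendstoUniformly uk u atTop)
    (θ : ℝ) (hθ : 0 < θ) (θk : ℕ → ℝ) (hθk : ∀ k, 0 < θk k)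
    (hθconv : Tendsto θk atTop (nhds θ))
    (hfbk : ∀ k, (frontier {x | 0 < uk k x}).Nonempty)
    (hlink : ∀ k x, 0 < uk k x → θk k * infDist x (frontier {y | 0 < uk k y}) ≤ uk k x)
    (hndk : ∀ k, ∀ x₀ ∈ frontier {y | 0 < uk k y}, ∀ r > (0 : ℝ),
      θk k * r ≤ sSup (uk k '' closedBall x₀ r)) :
    (∀ x, 0 < u x → θ * infDist x (frontier {y | 0 < u y}) ≤ u x) ∧
    (∀ x₀ ∈ frontier {y | 0 < u y}, ∀ r > (0 : ℝ),
      θ * r ≤ sSup (u '' closedBall x₀ r)) :=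
  ⟨HasLinearGrowth.of_tendstoUniformly hu huk huk0 hfbk (fun k => (hθk k).le) hlink hconv
      hθconv,
    IsStronglyNondegenerate.of_tendstoUniformly hu hu0 hfbk hθk hlink hndk hconv hθconv hθ⟩
end
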